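/- arXiv:1202.3470 — 7 statements merged into one kernel-verified Lean document; each statement's English description precedes it below -/
import Mathlib

section
/- For a pattern P of length m, for every shift length ℓ ∈ {1,…,m−1} there is at most one pair (j, σ) with 0 ≤ j < m such that j' := j − ℓ satisfies 0 < j' < j, P[0…j'−1] = P[ℓ…j−1] (i.e., the prefix of length j' matches the suffix of P[0…j−1] of length j'), and P[j'] = σ ≠ P[j]. In other words, distinct dictionary entries across all positions induce distinct shift lengths. -/
/-- For a pattern `P` of length `m` and each shift length `ℓ ∈ {1,…,m−1}`, there is at
most one pair `(j, σ)` with `j < m` such that `j' := j − ℓ` satisfies `0 < j' < j`,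
`P[0…j'−1] = P[ℓ…j−1]`, and `P[j'] = σ ≠ P[j]`. -/
theorem distinct_dictionary_entries_induce_distinct_shifts
    {α : Type*} (m : ℕ) (P : ℕ → α) (ℓ : ℕ) (hℓ1 : 1 ≤ ℓ) (hℓm : ℓ < m)
    (j₁ j₂ : ℕ) (σ₁ σ₂ : α)
    (h₁ : j₁ < m ∧ ℓ < j₁ ∧ (∀ t < j₁ - ℓ, P t = P (ℓ + t)) ∧
          P (j₁ - ℓ) = σ₁ ∧ σ₁ ≠ P j₁)
    (h₂ : j₂ < m ∧ ℓ < j₂ ∧ (∀ t < j₂ - ℓ, P t = P (ℓ + t)) ∧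
          P (j₂ - ℓ) = σ₂ ∧ σ₂ ≠ P j₂) :
    j₁ = j₂ ∧ σ₁ = σ₂ := by
  obtain ⟨hm1, hl1, hmatch1, hσ1, hne1⟩ := h₁
  obtain ⟨hm2, hl2, hmatch2, hσ2, hne2⟩ := h₂
  have key : ∀ a b : ℕ, ℓ < a → a < b →
      (∀ t < b - ℓ, P t = P (ℓ + t)) → P (a - ℓ) = P a := by
    intro a b ha hab hmatch
    have h := hmatch (a - ℓ) (by omega)
    rwa [Nat.add_sub_cancel' (le_of_lt ha)] at h
  have hj : j₁ = j₂ := by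
    rcases lt_trichotomy j₁ j₂ with h | h | h
    · exact absurd (hσ1 ▸ key j₁ j₂ hl1 h hmatch2) hne1
    · exact h
    · exact absurd (hσ2 ▸ key j₂ j₁ hl2 h hmatch1) hne2
  subst hj
  exact ⟨rfl, hσ1 ▸ hσ2 ▸ rfl⟩
end

section
/- The sum over all positions j ∈ {0,…,m−1} of the sizes of the KMP dictionaries D_j is at most m, i.e., Σ_{j=0}^{m−1} |D_j| ≤ m. -/
/-!
Send a dictionary entry `j'` of `D_j` to the shift `j - j'` at which the border `P[0…j'−1]`
sits inside `P[0…j−1]`; the shift lies in `[0, m)`. This map is injective: if two entries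
`(j₁, j₁')` and `(j₂, j₂')` with `j₁ < j₂` had the same shift, then `P[0…j₁']` would lie inside
the longer border `P[0…j₂'−1]` at that shift, forcing `P j₁' = P j₁`, which contradicts the
mismatch defining `j₁'`.
-/

namespace KMP

variable {α : Type*} (P : ℕ → α)

def IsMismatchedBorder (j k : ℕ) : Prop :=
  k < j ∧ (∀ t < k, P t = P (j - k + t)) ∧ P k ≠ P j

variable {P}

theorem IsMismatchedBorder.not_lt_of_sub_eq {j₁ k₁ j₂ k₂ : ℕ}
    (h₁ : IsMismatchedBorder P j₁ k₁) (h₂ : IsMismatchedBorder P j₂ k₂)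
    (hshift : j₁ - k₁ = j₂ - k₂) : ¬ j₁ < j₂ := by
  obtain ⟨hk₁, -, hmismatch⟩ := h₁
  obtain ⟨hk₂, hborder, -⟩ := h₂
  intro hj
  have hlt : k₁ < k₂ := by omega
  have hpos : j₂ - k₂ + k₁ = j₁ := by omega
  exact hmismatch (hpos ▸ hborder k₁ hlt)

theorem IsMismatchedBorder.eq_of_sub_eq {j₁ k₁ j₂ k₂ : ℕ}
    (h₁ : IsMismatchedBorder P j₁ k₁) (h₂ : IsMismatchedBorder P j₂ k₂)
    (hshift : j₁ - k₁ = j₂ - k₂) : j₁ = j₂ ∧ k₁ = k₂ := by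
  have hj : j₁ = j₂ := le_antisymm
    (not_lt.mp (h₂.not_lt_of_sub_eq h₁ hshift.symm)) (not_lt.mp (h₁.not_lt_of_sub_eq h₂ hshift))
  exact ⟨hj, by have := h₁.1; have := h₂.1; omega⟩

theorem sum_card_le_of_isMismatchedBorder (m : ℕ) (D : ℕ → Finset ℕ)
    (hD : ∀ j, ∀ k ∈ D j, IsMismatchedBorder P j k) :
    ∑ j ∈ Finset.range m, (D j).card ≤ m := by
  rw [← Finset.card_sigma]
  refine (Finset.card_le_card_of_injOn (t := Finset.range m) (fun p => p.1 - p.2) ?_ ?_).trans_eq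
    (Finset.card_range m)
  · intro p hp
    simp only [Finset.coe_sigma, Set.mem_sigma_iff, Finset.mem_coe, Finset.mem_range] at hp ⊢
    omega
  · rintro ⟨j₁, k₁⟩ hp ⟨j₂, k₂⟩ hq hshift
    simp only [Finset.coe_sigma, Set.mem_sigma_iff, Finset.mem_coe] at hp hq
    obtain ⟨rfl, rfl⟩ := (hD _ _ hp.2).eq_of_sub_eq (hD _ _ hq.2) hshift
    rfl

end KMP

/-- An entry `(σ, j')` of `D_j` is represented by its index `j'`, which determines `σ = P j'`. -/
theorem sum_of_dictionary_sizes_le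
    {α : Type*} [DecidableEq α] (m : ℕ) (P : ℕ → α) :
    ∑ j ∈ Finset.range m,
      ((Finset.range j).filter (fun j' =>
        0 < j' ∧ j' < j ∧ (∀ t < j', P t = P (j - j' + t)) ∧ P j' ≠ P j ∧
          ∀ j'' < j, j' < j'' → (∀ t < j'', P t = P (j - j'' + t)) →
            P j'' ≠ P j')).card ≤ m :=
  KMP.sum_card_le_of_isMismatchedBorder m _ fun _ _ hk =>
    let ⟨_, hlt, hborder, hmismatch, _⟩ := (Finset.mem_filter.mp hk).2
    ⟨hlt, hborder, hmismatch⟩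
end

section
/- If a string P of length m can be transformed into a string P' of length ℓ using at most k single-character insert, delete, and substitution operations (i.e., the edit distance between P and P' is at most k), then P' can be partitioned into at most 2k+1 contiguous nonempty substrings, each of which occurs as a substring of P, provided every symbol of P' occurs somewhere in P. -/
namespace Levenshtein

/-- A cost function for Levenshtein distance. -/
structure Cost (α β δ : Type*) where
  /-- Cost to delete an element from a list. -/
  delete : α → δ
  /-- Cost in insert an element into a list. -/
  insert : β → δ
  /-- Cost to substitute one element for another in a list. -/
  substitute : α → β → δ

/-- The default cost structure, for which all operations cost `1`. -/
def defaultCost {α : Type*} [DecidableEq α] : Cost α α ℕ where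
  delete _ := 1
  insert _ := 1
  substitute a b := if a = b then 0 else 1

end Levenshtein

/-- The Levenshtein distance with cost structure `C`, by the recurrence of the old Mathlib
definition (`levenshtein_nil_nil`, `levenshtein_nil_cons`, `levenshtein_cons_nil`,
`levenshtein_cons_cons`). -/
def levenshtein {α β δ : Type*} [AddZeroClass δ] [Min δ] (C : Levenshtein.Cost α β δ) :
    List α → List β → δ
  | [], [] => 0
  | [], y :: ys => C.insert y + levenshtein C [] ys
  | x :: xs, [] => C.delete x + levenshtein C xs []
  | x :: xs, y :: ys =>
    min (C.delete x + levenshtein C xs (y :: ys))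
      (min (C.insert y + levenshtein C (x :: xs) ys) (C.substitute x y + levenshtein C xs ys))

/-!
Read `P` and `P'` from the left along the Levenshtein recurrence, keeping an open block: the
stretch of `P'` copied from `P` since the last edit. A match extends the open block; a
deletion closes it, and an insertion or substitution closes it and adds the new symbol as a
one-letter block. So each edit costs at most two closed blocks, and `k` edits leave at most
`2k` closed blocks plus the open one.
-/

section

open Levenshtein

variable {α : Type*} [DecidableEq α]

theorem levenshtein_defaultCost_nil_left (P' : List α) :
    levenshtein defaultCost [] P' = P'.length := by
  induction P' with
  | nil => rw [levenshtein, List.length_nil]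
  | cons y ys ih => rw [levenshtein, ih, List.length_cons, defaultCost, Nat.add_comm]

theorem levenshtein_defaultCost_cons_cons_le_iff {x y : α} {xs ys : List α} {k : ℕ} :
    levenshtein defaultCost (x :: xs) (y :: ys) ≤ k ↔
      1 + levenshtein defaultCost xs (y :: ys) ≤ k ∨
        1 + levenshtein defaultCost (x :: xs) ys ≤ k ∨
          (if x = y then 0 else 1) + levenshtein defaultCost xs ys ≤ k := by
  rw [levenshtein, min_le_iff, min_le_iff]
  rfl

/-- `B` is the open block, a prefix of the unread suffix `Q` of `P`; the closed blocks `T` may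
be empty. -/
theorem exists_prefix_append_flatten_of_levenshtein_le {P : List α} :
    ∀ {Q P' : List α} {k : ℕ}, Q <:+: P → levenshtein defaultCost Q P' ≤ k →
      (∀ a ∈ P', a ∈ P) →
      ∃ (B : List α) (T : List (List α)),
        B <+: Q ∧ B ++ T.flatten = P' ∧ T.length ≤ 2 * k ∧ ∀ C ∈ T, C <:+: P := by
  intro Q
  induction Q with
  | nil =>
    intro P' k _ hdist hocc
    rw [levenshtein_defaultCost_nil_left] at hdist
    refine ⟨[], P'.map ([·]), List.nil_prefix, by simp [← List.flatMap_def],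
      by rw [List.length_map]; omega, ?_⟩
    simpa [List.singleton_infix_iff] using hocc
  | cons x xs ihQ =>
    intro P'
    induction P' with
    | nil => exact fun _ _ _ ↦ ⟨[], [], List.nil_prefix, rfl, Nat.zero_le _, by simp⟩
    | cons y ys ihP =>
      intro k hQ hdist hocc
      have hxs : xs <:+: P := (List.suffix_cons x xs).isInfix.trans hQ
      have hy : [y] <:+: P := (List.singleton_infix_iff _ _).2 (hocc y List.mem_cons_self)
      have hys : ∀ a ∈ ys, a ∈ P := fun a ha ↦ hocc a (List.mem_cons_of_mem _ ha)
      rcases levenshtein_defaultCost_cons_cons_le_iff.1 hdist with hdel | hins | hsub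
      · obtain ⟨B, T, hB, hBT, hT, hTP⟩ := ihQ (k := k - 1) hxs (by omega) hocc
        refine ⟨[], B :: T, List.nil_prefix, hBT, ?_, List.forall_mem_cons.2
          ⟨hB.isInfix.trans hxs, hTP⟩⟩
        rw [List.length_cons]; omega
      · obtain ⟨B, T, hB, hBT, hT, hTP⟩ := ihP (k := k - 1) hQ (by omega) hys
        refine ⟨[], [y] :: B :: T, List.nil_prefix, by simp [hBT], ?_, List.forall_mem_cons.2
          ⟨hy, List.forall_mem_cons.2 ⟨hB.isInfix.trans hQ, hTP⟩⟩⟩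
        rw [List.length_cons, List.length_cons]; omega
      · by_cases hxy : x = y
        · subst hxy
          rw [if_pos rfl, Nat.zero_add] at hsub
          obtain ⟨B, T, hB, hBT, hT, hTP⟩ := ihQ hxs hsub hys
          exact ⟨x :: B, T, List.cons_prefix_cons.2 ⟨rfl, hB⟩, by simp [hBT], hT, hTP⟩
        · rw [if_neg hxy] at hsub
          obtain ⟨B, T, hB, hBT, hT, hTP⟩ := ihQ (k := k - 1) hxs (by omega) hys
          refine ⟨[], [y] :: B :: T, List.nil_prefix, by simp [hBT], ?_, List.forall_mem_cons.2
            ⟨hy, List.forall_mem_cons.2 ⟨hB.isInfix.trans hxs, hTP⟩⟩⟩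
          rw [List.length_cons, List.length_cons]; omega

end

/-- If the edit distance between `P` (of length `m`) and `P'` is at most `k`, and every
symbol of `P'` occurs in `P`, then `P'` can be partitioned into at most `2k+1`
contiguous nonempty blocks, each occurring as a substring of `P`. -/
theorem p_representation_of_bounded_edit_distance
    {α : Type*} [DecidableEq α] (k : ℕ) (P P' : List α)
    (hdist : levenshtein Levenshtein.defaultCost P P' ≤ k)
    (hocc : ∀ a ∈ P', a ∈ P) :
    ∃ L : List (List α), L.flatten = P' ∧ L.length ≤ 2 * k + 1 ∧
      ∀ B ∈ L, B ≠ [] ∧ B <:+: P := by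
  obtain ⟨B, T, hB, hBT, hT, hTP⟩ :=
    exists_prefix_append_flatten_of_levenshtein_le (List.infix_refl P) hdist hocc
  have hBTP : ∀ C ∈ B :: T, C <:+: P := List.forall_mem_cons.2 ⟨hB.isInfix, hTP⟩
  refine ⟨(B :: T).filter (· ≠ []), ?_, ?_, ?_⟩
  · rw [List.flatten_filter_ne_nil, List.flatten_cons, hBT]
  · calc ((B :: T).filter (· ≠ [])).length ≤ (B :: T).length := List.length_filter_le _ _
      _ ≤ 2 * k + 1 := by rw [List.length_cons]; omega
  · intro C hC
    obtain ⟨hCBT, hC⟩ := List.mem_filter.1 hC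
    exact ⟨of_decide_eq_true hC, hBTP C hCBT⟩
end

section
/- Let T be a string and fix a partition of T into contiguous blocks (p-regions) constructed greedily from left to right with respect to a pattern P: each block is a maximal-extension substring, meaning for every block boundary at position i, the substring formed by appending T[i] to the preceding block is not a substring of P aligned consistently (formally: the greedy minimal-length p-representation). Then this greedy p-representation has the minimum possible number of blocks among all p-representations of T with respect to P. -/
/-!
Greedy stays ahead. Compare the greedy blocks with any other p-representation block by
block. If some competing block `B'` ended strictly after the end of the current greedy block
`B`, then `B'` would contain `B` followed by the first letter `c` of the next greedy block, so
`B ++ [c]` would occur in `P`, contradicting greediness. Hence the `k`-th competing block always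
ends no later than the `k`-th greedy block, and the competitor needs at least as many blocks.
-/

section

variable {α : Type*}

def IsGreedyBlocks (P : List α) (R : List (List α)) : Prop :=
  R.IsChain fun B C => ∀ c ∈ C.head?, ¬ B ++ [c] <:+: P

/-- `d` is the part of the current competing block that overlaps the previous greedy block. -/
theorem IsGreedyBlocks.length_le {P : List α} {R : List (List α)} (hne : ∀ B ∈ R, B ≠ [])
    (hR : IsGreedyBlocks P R) {R' : List (List α)} (hR' : ∀ B' ∈ R', B' <:+: P)
    (d : List α) (h : d ++ R.flatten = R'.flatten) : R.length ≤ R'.length := by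
  induction R' generalizing d R with
  | nil =>
    cases R with
    | nil => rfl
    | cons B Rs =>
      simp only [List.flatten_cons, List.flatten_nil, List.append_eq_nil_iff] at h
      exact absurd h.2.1 (hne B List.mem_cons_self)
  | cons B' R'' ih =>
    cases R with
    | nil => simp
    | cons B Rs =>
      have hne' : ∀ C ∈ Rs, C ≠ [] := fun C hC => hne C (List.mem_cons_of_mem B hC)
      have hR'' : ∀ C' ∈ R'', C' <:+: P := fun C' hC' => hR' C' (List.mem_cons_of_mem B' hC')
      suffices ∃ d', d' ++ Rs.flatten = R''.flatten by
        obtain ⟨d', hd'⟩ := this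
        simpa using ih hne' hR.tail hR'' d' hd'
      rw [List.flatten_cons, List.flatten_cons, ← List.append_assoc,
        List.append_eq_append_iff] at h
      obtain ⟨_ | ⟨c, e⟩, hB', hRs⟩ | ⟨d', -, hR''⟩ := h
      · exact ⟨[], hRs⟩
      · exfalso
        obtain ⟨C, Rt, rfl⟩ := List.exists_cons_of_ne_nil (l := Rs) (by rintro rfl; simp at hRs)
        have hc : c ∈ C.head? := by
          obtain ⟨x, xs, rfl⟩ := List.exists_cons_of_ne_nil (hne' C List.mem_cons_self)
          simp_all
        have hBc : B ++ [c] <:+: B' := ⟨d, e, by simp [hB']⟩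
        exact (List.isChain_cons_cons.1 hR).1 c hc (hBc.trans (hR' B' List.mem_cons_self))
      · exact ⟨d', hR''.symm⟩
end

/-- The greedy left-to-right p-representation of `T` with respect to `P` (each block
cannot be extended by the next character of the text and still occur in `P`) has the
minimum possible number of blocks among all p-representations of `T`. -/
theorem greedy_p_representation_minimal
    {α : Type*} (P T : List α)
    (R : List (List α)) (hjoin : R.flatten = T)
    (hne : ∀ B ∈ R, B ≠ [])
    (hgreedy : ∀ i, (h : i + 1 < R.length) → ∀ c ∈ (R.get ⟨i + 1, h⟩).head?,
        ¬ (R.get ⟨i, by omega⟩ ++ [c]) <:+: P) :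
    ∀ R' : List (List α), R'.flatten = T → (∀ B ∈ R', B ≠ [] ∧ B <:+: P) →
      R.length ≤ R'.length := by
  intro R' hjoin' hR'
  have hR : IsGreedyBlocks P R := List.isChain_iff_getElem.2 fun i hi => hgreedy i hi
  exact hR.length_le hne (fun B' hB' => (hR' B' hB').2) [] (by rw [List.nil_append, hjoin, hjoin'])
end

section
/- In a minimal-length p-representation of a text T with respect to a pattern P, any substring of T that equals a substring of P overlaps at most three p-regions of the representation. -/
/-!
If `T[a…b]` met four blocks `m < … < M` of the representation, the two blocks `m + 1` and
`m + 2` would lie inside `T[a…b]`, so their concatenation would be a substring of `P`;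
merging them would give a shorter p-representation.
-/

theorem Finset.exists_add_le_of_lt_card {s : Finset ℕ} {k : ℕ} (h : k < s.card) :
    ∃ m ∈ s, ∃ M ∈ s, m + k ≤ M := by
  have hne : s.Nonempty := Finset.card_pos.mp (by omega)
  have hsub : s ⊆ Finset.Icc (s.min' hne) (s.max' hne) := fun x hx =>
    Finset.mem_Icc.mpr ⟨s.min'_le x hx, s.le_max' x hx⟩
  have hcard := Finset.card_le_card hsub
  rw [Nat.card_Icc] at hcard
  exact ⟨_, s.min'_mem hne, _, s.max'_mem hne, by omega⟩

namespace List

variable {α : Type*}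

theorem infix_take_drop_of_append_eq {L u v w : List α} (h : u ++ v ++ w = L) {a n : ℕ}
    (ha : a ≤ u.length) (hn : u.length + v.length ≤ a + n) : v <:+: (L.drop a).take n := by
  have hdrop : L.drop a = u.drop a ++ v ++ w := by
    rw [← h, append_assoc, drop_append_of_le_length ha, append_assoc]
  have hpre : u.drop a ++ v <+: (L.drop a).take n :=
    prefix_take_iff.mpr
      ⟨hdrop ▸ prefix_append _ _, by simp only [length_append, length_drop]; omega⟩
  exact (suffix_append _ _).isInfix.trans hpre.isInfix

theorem length_flatten_take_le_of_le (R : List (List α)) {i j : ℕ} (h : i ≤ j) :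
    (R.take i).flatten.length ≤ (R.take j).flatten.length :=
  (take_prefix_take_left h).flatten.length_le

theorem flatten_take_add (R : List (List α)) (i k : ℕ) :
    (R.take (i + k)).flatten = (R.take i).flatten ++ ((R.drop i).take k).flatten := by
  rw [take_add, flatten_append]

/-- A run of `k ≥ 2` consecutive blocks could be merged into a single block, shortening `R`. -/
theorem not_infix_flatten_segment_of_minimal {P : List α} {R : List (List α)}
    (hval : ∀ B ∈ R, B ≠ [] ∧ B <:+: P)
    (hmin : ∀ R' : List (List α), R'.flatten = R.flatten →
      (∀ B ∈ R', B ≠ [] ∧ B <:+: P) → R.length ≤ R'.length)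
    {i k : ℕ} (hk : 2 ≤ k) (hik : i + k ≤ R.length) :
    ¬ ((R.drop i).take k).flatten <:+: P := by
  intro hP
  set S := (R.drop i).take k
  have hS : S.length = k := by simp only [S, length_take, length_drop]; omega
  have hSne : S.flatten ≠ [] := by
    obtain ⟨B, hB⟩ := exists_mem_of_length_pos (l := S) (by omega)
    have hBR : B ∈ R := mem_of_mem_drop (mem_of_mem_take hB)
    exact fun h => (hval B hBR).1 (flatten_eq_nil_iff.mp h B hB)
  have hjoin : (R.take i ++ S.flatten :: R.drop (i + k)).flatten = R.flatten := by
    rw [flatten_append, flatten_cons, ← append_assoc, ← flatten_take_add, ← flatten_append,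
      take_append_drop]
  have hval' : ∀ B ∈ R.take i ++ S.flatten :: R.drop (i + k), B ≠ [] ∧ B <:+: P := by
    intro B hB
    simp only [mem_append, mem_cons] at hB
    rcases hB with hB | rfl | hB
    · exact hval B (mem_of_mem_take hB)
    · exact ⟨hSne, hP⟩
    · exact hval B (mem_of_mem_drop hB)
  have := hmin _ hjoin hval'
  simp only [length_append, length_take, length_cons, length_drop] at this
  omega

end List

theorem substring_overlaps_at_most_three_regions_general
    {α : Type*} (P T : List α)
    (R : List (List α)) (hjoin : R.flatten = T)
    (hval : ∀ B ∈ R, B ≠ [] ∧ B <:+: P)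
    (hmin : ∀ R' : List (List α), R'.flatten = T →
      (∀ B ∈ R', B ≠ [] ∧ B <:+: P) → R.length ≤ R'.length)
    (a b : ℕ)
    (hsub : (T.drop a).take (b + 1 - a) <:+: P) :
    ((Finset.range R.length).filter (fun i =>
        ((R.take i).flatten).length ≤ b ∧ a < ((R.take (i + 1)).flatten).length)).card
      ≤ 3 := by
  subst hjoin
  by_contra! hcard
  obtain ⟨m, hm, M, hM, hmM⟩ := Finset.exists_add_le_of_lt_card hcard
  simp only [Finset.mem_filter, Finset.mem_range] at hm hM
  have hsplit : (R.take (m + 1)).flatten ++ ((R.drop (m + 1)).take 2).flatten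
      ++ (R.drop (m + 1 + 2)).flatten = R.flatten := by
    rw [← List.flatten_take_add, ← List.flatten_append, List.take_append_drop]
  have hend : (R.take (m + 1)).flatten.length + ((R.drop (m + 1)).take 2).flatten.length ≤ b := by
    rw [← List.length_append, ← List.flatten_take_add]
    exact (List.length_flatten_take_le_of_le R (by omega)).trans hM.2.1
  have hinner : ((R.drop (m + 1)).take 2).flatten <:+: P :=
    (List.infix_take_drop_of_append_eq hsplit (by omega) (by omega)).trans hsub
  exact List.not_infix_flatten_segment_of_minimal hval hmin le_rfl (by omega) hinner

/-- Three-regions lemma: in a minimal-length p-representation of `T` with respect to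
`P`, any substring `T[a…b]` of `T` that equals a substring of `P` overlaps at most
three p-regions of the representation. -/
theorem substring_overlaps_at_most_three_regions
    {α : Type*} (P T : List α)
    (R : List (List α)) (hjoin : R.flatten = T)
    (hval : ∀ B ∈ R, B ≠ [] ∧ B <:+: P)
    (hmin : ∀ R' : List (List α), R'.flatten = T →
      (∀ B ∈ R', B ≠ [] ∧ B <:+: P) → R.length ≤ R'.length)
    (a b : ℕ) (hab : a ≤ b) (hb : b < T.length)
    (hsub : (T.drop a).take (b + 1 - a) <:+: P) :
    ((Finset.range R.length).filter (fun i =>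
        ((R.take i).flatten).length ≤ b ∧ a < ((R.take (i + 1)).flatten).length)).card
      ≤ 3 :=
  substring_overlaps_at_most_three_regions_general P T R hjoin hval hmin a b hsub
end

section
/- The KMP failure function is well-defined and strictly decreasing under iteration: for a pattern P of length m and any j with 1 ≤ j ≤ m, let π(j) be the length of the longest proper prefix of P[0…j−1] that is also a suffix of P[0…j−1]. Then π(j) < j, and for any j' that is the length of some prefix of P[0…j−1] which is also a suffix of P[0…j−1] with j' < j, we have j' ≤ π(j); moreover the set of all such border lengths of P[0…j−1] is exactly {π(j), π(π(j)), π(π(π(j))), …, 0}. -/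
/-- `j'` is a border length of the prefix `P[0…j−1]`: it is a proper prefix length
(`j' < j`) and `P[0…j'−1] = P[j−j'…j−1]`. -/
def IsBorderLen {α : Type*} (P : ℕ → α) (j j' : ℕ) : Prop :=
  j' < j ∧ ∀ t < j', P t = P (j - j' + t)

/-- The KMP failure function: `kmpPi P j` is the length of the longest border of the
prefix `P[0…j−1]`. -/
def kmpPi {α : Type*} [DecidableEq α] (P : ℕ → α) (j : ℕ) : ℕ :=
  Nat.findGreatest (fun j' => j' < j ∧ ∀ t < j', P t = P (j - j' + t)) j

lemma kmpPi_border {α : Type*} [DecidableEq α] (P : ℕ → α) {j : ℕ} (h1 : 1 ≤ j) :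
    IsBorderLen P j (kmpPi P j) := by
  have h0 : (fun j' => j' < j ∧ ∀ t < j', P t = P (j - j' + t)) 0 := by
    exact ⟨h1, fun t ht => absurd ht (Nat.not_lt_zero t)⟩
  exact Nat.findGreatest_spec (Nat.zero_le j) h0

lemma kmpPi_lt {α : Type*} [DecidableEq α] (P : ℕ → α) {j : ℕ} (h1 : 1 ≤ j) :
    kmpPi P j < j := (kmpPi_border P h1).1

lemma kmpPi_le {α : Type*} [DecidableEq α] (P : ℕ → α) {j j' : ℕ}
    (h : IsBorderLen P j j') : j' ≤ kmpPi P j :=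
  Nat.le_findGreatest (le_of_lt h.1) h

/-- border of border is a border -/
lemma border_trans {α : Type*} (P : ℕ → α) {j k i : ℕ}
    (h1 : IsBorderLen P j k) (h2 : IsBorderLen P k i) : IsBorderLen P j i := by
  obtain ⟨hkj, hk⟩ := h1
  obtain ⟨hik, hi⟩ := h2
  refine ⟨hik.trans hkj, fun t ht => ?_⟩
  have h3 : k - i + t < k := by omega
  have := hk _ h3
  rw [hi t ht, this]
  congr 1
  omega

/-- a border shorter than the longest border is a border of the longest border -/
lemma border_of_pi {α : Type*} [DecidableEq α] (P : ℕ → α) {j j' : ℕ}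
    (h : IsBorderLen P j j') (hlt : j' < kmpPi P j) : IsBorderLen P (kmpPi P j) j' := by
  obtain ⟨hjj, hj⟩ := h
  have h1 : 1 ≤ j := by omega
  obtain ⟨hpj, hp⟩ := kmpPi_border P h1
  refine ⟨hlt, fun t ht => ?_⟩
  have h3 : kmpPi P j - j' + t < kmpPi P j := by omega
  have := hp _ h3
  rw [hj t (by omega)] at *
  rw [this]
  congr 1
  omega

lemma kmpPi_zero {α : Type*} [DecidableEq α] (P : ℕ → α) : kmpPi P 0 = 0 := rfl

lemma iterate_zero' {α : Type*} [DecidableEq α] (P : ℕ → α) (n : ℕ) :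
    (kmpPi P)^[n] 0 = 0 := by
  induction n with
  | zero => rfl
  | succ n ih => rw [Function.iterate_succ_apply, kmpPi_zero, ih]

lemma iterate_border {α : Type*} [DecidableEq α] (P : ℕ → α) (n : ℕ) :
    ∀ j, 1 ≤ j → IsBorderLen P j ((kmpPi P)^[n + 1] j) := by
  induction n with
  | zero => intro j h1; simpa using kmpPi_border P h1
  | succ n ih =>
    intro j h1
    rw [Function.iterate_succ_apply]
    rcases Nat.eq_zero_or_pos (kmpPi P j) with h0 | hpos
    · rw [h0, iterate_zero']
      exact ⟨h1, fun t ht => absurd ht (Nat.not_lt_zero t)⟩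
    · exact border_trans P (kmpPi_border P h1) (ih _ hpos)

lemma border_iterate {α : Type*} [DecidableEq α] (P : ℕ → α) :
    ∀ j, ∀ j', IsBorderLen P j j' → ∃ n, 0 < n ∧ (kmpPi P)^[n] j = j' := by
  intro j
  induction j using Nat.strong_induction_on with
  | _ j ih =>
    intro j' hb
    have hle := kmpPi_le P hb
    rcases eq_or_lt_of_le hle with heq | hlt
    · exact ⟨1, one_pos, heq.symm ▸ rfl⟩
    · have hjj := hb.1
      have h1 : 1 ≤ j := by omega
      have hb' : IsBorderLen P (kmpPi P j) j' := border_of_pi P hb hlt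
      obtain ⟨n, hn, hni⟩ := ih (kmpPi P j) (kmpPi_lt P h1) j' hb'
      exact ⟨n + 1, Nat.succ_pos n, by rw [Function.iterate_add_apply, Function.iterate_one]; exact hni⟩

/-- The KMP failure function is well-defined and strictly decreasing under iteration:
for `1 ≤ j ≤ m`, `π(j) < j`, every border length `j'` of `P[0…j−1]` satisfies
`j' ≤ π(j)`, and the set of border lengths of `P[0…j−1]` is exactly the set of
iterates `{π(j), π(π(j)), π(π(π(j))), …, 0}`. -/
theorem kmp_failure_function_spec
    {α : Type*} [DecidableEq α] (m : ℕ) (P : ℕ → α) (j : ℕ)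
    (h1 : 1 ≤ j) (hjm : j ≤ m) :
    kmpPi P j < j ∧
    (∀ j', IsBorderLen P j j' → j' ≤ kmpPi P j) ∧
    (∀ j', IsBorderLen P j j' ↔ ∃ n, 0 < n ∧ (kmpPi P)^[n] j = j') := by
  refine ⟨kmpPi_lt P h1, fun j' h => kmpPi_le P h, fun j' => ⟨border_iterate P j j', ?_⟩⟩
  rintro ⟨n, hn, rfl⟩
  obtain ⟨n, rfl⟩ := Nat.exists_eq_add_of_lt hn
  simpa [Nat.add_comm] using iterate_border P n j h1
end

section
/- Correctness of the dictionary-based real-time KMP step: let P have length m and suppose P[0…j−1] = T[i−j…i−1] with j the maximal such value, and P[j] ≠ T[i]. If the pair (T[i], j') is in the dictionary D_j, then j' is the largest index such that P[0…j'−1] = T[i−j'…i−1] and P[j'] = T[i]; and if no pair with symbol T[i] is in D_j, then there is no index j'' > 0 with P[0…j''−1] = T[i−j''…i−1] and P[j''] = T[i]. -/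
/-- `TextMatch P T i j''` : the prefix `P[0…j''−1]` of the pattern matches the text
suffix `T[i−j''…i−1]`. -/
def TextMatch {α : Type*} (P T : ℕ → α) (i j'' : ℕ) : Prop :=
  j'' ≤ i ∧ ∀ t < j'', P t = T (i - j'' + t)

/-- `InDict P j j' σ` : the pair `(σ, j')` belongs to the KMP dictionary `D_j`,
i.e. `0 < j' < j` is the largest index such that `P[0…j'−1] = P[j−j'…j−1]` and
`P[j'] = σ ≠ P[j]`. -/
def InDict {α : Type*} (P : ℕ → α) (j j' : ℕ) (σ : α) : Prop :=
  0 < j' ∧ j' < j ∧ (∀ t < j', P t = P (j - j' + t)) ∧ P j' = σ ∧ σ ≠ P j ∧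
    ∀ j'', j' < j'' → j'' < j → (∀ t < j'', P t = P (j - j'' + t)) → P j'' ≠ σ

lemma overlap_iff_textmatch {α : Type*} (P T : ℕ → α) (i j k : ℕ)
    (hji : j ≤ i) (hkj : k ≤ j) (hmatch : ∀ t < j, P t = T (i - j + t)) :
    (∀ t < k, P t = P (j - k + t)) ↔ TextMatch P T i k := by
  constructor
  · intro h
    refine ⟨hkj.trans hji, fun t ht => ?_⟩
    rw [h t ht, hmatch (j - k + t) (by omega)]
    congr 1
    omega
  · rintro ⟨-, h⟩ t ht
    rw [h t ht, hmatch (j - k + t) (by omega)]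
    congr 1
    omega

/-- Correctness of the dictionary-based real-time KMP step: suppose
`P[0…j−1] = T[i−j…i−1]` with `j` maximal, and `P[j] ≠ T[i]`.  If `(T[i], j')` is in
the dictionary `D_j`, then `j'` is the largest positive index such that
`P[0…j'−1] = T[i−j'…i−1]` and `P[j'] = T[i]`; and if no pair with symbol `T[i]` is
in `D_j`, then no positive index `j''` satisfies `P[0…j''−1] = T[i−j''…i−1]` and
`P[j''] = T[i]`. -/
theorem dictionary_kmp_step_correct
    {α : Type*} (m : ℕ) (P T : ℕ → α) (i j : ℕ)
    (hjm : j < m) (hji : j ≤ i)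
    (hmatch : ∀ t < j, P t = T (i - j + t))
    (hmax : ∀ j'', TextMatch P T i j'' → j'' ≤ j)
    (hmis : P j ≠ T i) :
    (∀ j', InDict P j j' (T i) →
      (TextMatch P T i j' ∧ P j' = T i ∧
        ∀ j'', 0 < j'' → TextMatch P T i j'' → P j'' = T i → j'' ≤ j')) ∧
    ((∀ j', ¬ InDict P j j' (T i)) →
      ∀ j'', 0 < j'' → TextMatch P T i j'' → P j'' ≠ T i) := by
  classical
  constructor
  · rintro j' ⟨hpos, hlt, hov, hPj', hne, hmaxd⟩
    refine ⟨(overlap_iff_textmatch P T i j j' hji hlt.le hmatch).1 hov, hPj', ?_⟩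
    intro j'' hpos'' htm hP''
    have hle : j'' ≤ j := hmax j'' htm
    have hne'' : j'' ≠ j := fun h => hmis (h ▸ hP'')
    have hov'' : ∀ t < j'', P t = P (j - j'' + t) :=
      (overlap_iff_textmatch P T i j j'' hji hle hmatch).2 htm
    by_contra h
    exact hmaxd j'' (by omega) (by omega) hov'' hP''
  · intro hnone j'' hpos htm hP
    have hle : j'' ≤ j := hmax j'' htm
    have hne'' : j'' ≠ j := fun h => hmis (h ▸ hP)
    set Q : ℕ → Prop := fun k =>
      0 < k ∧ k < j ∧ (∀ t < k, P t = P (j - k + t)) ∧ P k = T i with hQ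
    have hQj'' : Q j'' :=
      ⟨hpos, by omega, (overlap_iff_textmatch P T i j j'' hji hle hmatch).2 htm, hP⟩
    set k := Nat.findGreatest Q j with hk
    have hQk : Q k := Nat.findGreatest_spec (by omega) hQj''
    obtain ⟨hk0, hkj, hkov, hkP⟩ := hQk
    refine hnone k ⟨hk0, hkj, hkov, hkP, fun h => hmis h.symm, ?_⟩
    intro l hkl hlj hlov hlP
    have : ¬ Q l := Nat.findGreatest_is_greatest hkl (by omega)
    have hQl : Q l := ⟨by omega, hlj, hlov, hlP⟩
    exact this hQl
end
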